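/- Let μ ∈ C³ with μ1+μ2+μ3 = 0 and μi − μj ∉ Z for all i ≠ j, and let ℓ1, ℓ2 ∈ N₀ = {0,1,2,…}. Then the iterated residue of F̃0 at u1 = −μ1 − ℓ1 and u2 = μ3 − ℓ2 is given by lim_{u2 → μ3−ℓ2} (u2 − μ3 + ℓ2) · [ lim_{u1 → −μ1−ℓ1} (u1 + μ1 + ℓ1) F̃0((u1,u2), μ) ] = (4/π⁴) cos⁰(μ) · ((−1)^{ℓ1+ℓ2}/(ℓ1! ℓ2!)) · (Γ(μ3−μ1−ℓ1) Γ(μ3−μ1−ℓ2)/Γ(μ3−μ1−ℓ1−ℓ2)) · Γ(μ2−μ1−ℓ1) Γ(μ3−μ2−ℓ2). -/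

import Mathlib

open scoped BigOperators Topology

/-- `cos⁰(μ) = (2/π) Π_{i<j} cos((π/2)(μi−μj))`. -/
noncomputable def cos0 (μ : Fin 3 → ℂ) : ℂ :=
  (2 / (Real.pi : ℂ)) *
    (Complex.cos ((Real.pi : ℂ) / 2 * (μ 0 - μ 1)) *
      Complex.cos ((Real.pi : ℂ) / 2 * (μ 0 - μ 2)) *
      Complex.cos ((Real.pi : ℂ) / 2 * (μ 1 - μ 2)))

/-- `F̃0(u,μ) = (4/π⁴) cos⁰(μ) (Π_i Γ(u1+μi) Γ(u2−μi)) / Γ(u1+u2)`. -/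
noncomputable def Ftilde0 (u1 u2 : ℂ) (μ : Fin 3 → ℂ) : ℂ :=
  (4 / (Real.pi : ℂ) ^ 4) * cos0 μ *
    (∏ i, Complex.Gamma (u1 + μ i) * Complex.Gamma (u2 - μ i)) /
    Complex.Gamma (u1 + u2)

open Filter Complex

/-! Each factor `Γ(z)` with a pole at `z = -n` contributes `(-1)^n / n!` to the residue, and the
remaining Gamma factors are continuous there because `μᵢ - μⱼ ∉ ℤ`; the denominator is handled
through the entire function `1/Γ`. Taking the residue in `u1` first leaves a meromorphic function
of `u2` of the same shape, whose residue is computed in the same way. -/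

namespace Complex

theorem tendsto_add_nat_mul_Gamma_nhds_neg_nat (n : ℕ) :
    Tendsto (fun s : ℂ => (s + n) * Gamma s) (𝓝[≠] (-n)) (𝓝 ((-1) ^ n / n.factorial)) := by
  induction n with
  | zero => simpa using tendsto_self_mul_Gamma_nhds_zero
  | succ n ih =>
    have hpole : (-(n + 1 : ℕ) : ℂ) ≠ 0 := neg_ne_zero.mpr (Nat.cast_ne_zero.mpr n.succ_ne_zero)
    have hshift : map (· + 1) (𝓝[≠] (-(n + 1 : ℕ) : ℂ)) = 𝓝[≠] (-n : ℂ) := by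
      rw [map_add_right_nhdsNE]
      push_cast
      ring_nf
    have hinv : Tendsto (fun s : ℂ => s⁻¹) (𝓝[≠] (-(n + 1 : ℕ) : ℂ)) (𝓝 (-(n + 1 : ℕ) : ℂ)⁻¹) :=
      tendsto_nhdsWithin_of_tendsto_nhds (continuousAt_inv₀ hpole).tendsto
    have hlim := (ih.comp (hshift ▸ tendsto_map)).mul hinv
    have hfun : ∀ᶠ s in 𝓝[≠] (-(n + 1 : ℕ) : ℂ),
        ((s + 1 + n) * Gamma (s + 1)) * s⁻¹ = (s + (n + 1 : ℕ)) * Gamma s := by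
      filter_upwards [nhdsWithin_le_nhds (isOpen_ne.mem_nhds hpole)] with s (hs : s ≠ 0)
      rw [Gamma_add_one s hs]
      field_simp
      push_cast
      ring
    convert hlim.congr' hfun using 2
    rw [Nat.factorial_succ, pow_succ]
    push_cast
    field_simp

theorem tendsto_sub_add_nat_mul_Gamma_sub_nhds (c : ℂ) (n : ℕ) :
    Tendsto (fun s : ℂ => (s - c + n) * Gamma (s - c)) (𝓝[≠] (c - n))
      (𝓝 ((-1) ^ n / n.factorial)) := by
  have hshift : map (· - c) (𝓝[≠] (c - n)) = 𝓝[≠] (-n : ℂ) := by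
    simp_rw [sub_eq_add_neg _ c]
    rw [map_add_right_nhdsNE]
    ring_nf
  exact (tendsto_add_nat_mul_Gamma_nhds_neg_nat n).comp (hshift ▸ tendsto_map)

theorem continuousAt_Gamma_sub_nat {z : ℂ} (hz : ∀ k : ℤ, z ≠ k) (n : ℕ) :
    ContinuousAt Gamma (z - n) := by
  refine (differentiableAt_Gamma _ fun m h => hz (n - m) ?_).continuousAt
  push_cast
  linear_combination h

end Complex

noncomputable def Ftilde0ResidueFst (μ : Fin 3 → ℂ) (ℓ1 : ℕ) (u2 : ℂ) : ℂ :=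
  (4 / (Real.pi : ℂ) ^ 4) * cos0 μ * ((-1) ^ ℓ1 / ℓ1.factorial) *
    Gamma (μ 1 - μ 0 - ℓ1) * Gamma (μ 2 - μ 0 - ℓ1) *
    (Gamma (u2 - μ 0) * Gamma (u2 - μ 1) * Gamma (u2 - μ 2)) * (Gamma (u2 - μ 0 - ℓ1))⁻¹

theorem Ftilde0_eq_mul_inv_Gamma (u1 u2 : ℂ) (μ : Fin 3 → ℂ) :
    Ftilde0 u1 u2 μ = (4 / (Real.pi : ℂ) ^ 4) * cos0 μ *
      (Gamma (u1 + μ 0) * Gamma (u1 + μ 1) * Gamma (u1 + μ 2)) *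
      (Gamma (u2 - μ 0) * Gamma (u2 - μ 1) * Gamma (u2 - μ 2)) * (Gamma (u1 + u2))⁻¹ := by
  simp only [Ftilde0, Fin.prod_univ_three]
  ring

theorem tendsto_residue_Ftilde0_fst (μ : Fin 3 → ℂ) (h10 : ∀ k : ℤ, μ 1 - μ 0 ≠ k)
    (h20 : ∀ k : ℤ, μ 2 - μ 0 ≠ k) (ℓ1 : ℕ) (u2 : ℂ) :
    Tendsto (fun u1 : ℂ => (u1 + μ 0 + ℓ1) * Ftilde0 u1 u2 μ) (𝓝[≠] (-μ 0 - ℓ1))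
      (𝓝 (Ftilde0ResidueFst μ ℓ1 u2)) := by
  have hpole := tendsto_sub_add_nat_mul_Gamma_sub_nhds (-μ 0) ℓ1
  simp only [sub_neg_eq_add] at hpole
  have hΓ1 : ContinuousAt Gamma (-μ 0 - ℓ1 + μ 1) := by
    convert continuousAt_Gamma_sub_nat h10 ℓ1 using 1; ring
  have hΓ2 : ContinuousAt Gamma (-μ 0 - ℓ1 + μ 2) := by
    convert continuousAt_Gamma_sub_nat h20 ℓ1 using 1; ring
  have hreg : ContinuousAt (fun u1 : ℂ => Gamma (u1 + μ 1) * Gamma (u1 + μ 2) *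
      (Gamma (u1 + u2))⁻¹) (-μ 0 - ℓ1) :=
    (by fun_prop : ContinuousAt (fun u1 : ℂ => Gamma (u1 + μ 1) * Gamma (u1 + μ 2)) _).mul
      (differentiable_one_div_Gamma.continuous.comp (continuous_add_const u2)).continuousAt
  have hlim := (hpole.mul (tendsto_nhdsWithin_of_tendsto_nhds hreg.tendsto)).const_mul
    ((4 / (Real.pi : ℂ) ^ 4) * cos0 μ * (Gamma (u2 - μ 0) * Gamma (u2 - μ 1) * Gamma (u2 - μ 2)))
  convert hlim using 1
  · funext u1
    rw [Ftilde0_eq_mul_inv_Gamma]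
    ring
  · simp only [Ftilde0ResidueFst]
    ring_nf

theorem tendsto_residue_Ftilde0ResidueFst (μ : Fin 3 → ℂ) (h20 : ∀ k : ℤ, μ 2 - μ 0 ≠ k)
    (h21 : ∀ k : ℤ, μ 2 - μ 1 ≠ k) (ℓ1 ℓ2 : ℕ) :
    Tendsto (fun u2 : ℂ => (u2 - μ 2 + ℓ2) * Ftilde0ResidueFst μ ℓ1 u2) (𝓝[≠] (μ 2 - ℓ2))
      (𝓝 ((4 / (Real.pi : ℂ) ^ 4) * cos0 μ *
        ((-1) ^ (ℓ1 + ℓ2) / ((Nat.factorial ℓ1 : ℂ) * (Nat.factorial ℓ2 : ℂ))) *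
        (Gamma (μ 2 - μ 0 - ℓ1) * Gamma (μ 2 - μ 0 - ℓ2) / Gamma (μ 2 - μ 0 - ℓ1 - ℓ2)) *
        Gamma (μ 1 - μ 0 - ℓ1) * Gamma (μ 2 - μ 1 - ℓ2))) := by
  have hpole := tendsto_sub_add_nat_mul_Gamma_sub_nhds (μ 2) ℓ2
  have hΓ0 : ContinuousAt Gamma (μ 2 - ℓ2 - μ 0) := by
    convert continuousAt_Gamma_sub_nat h20 ℓ2 using 1; ring
  have hΓ1 : ContinuousAt Gamma (μ 2 - ℓ2 - μ 1) := by
    convert continuousAt_Gamma_sub_nat h21 ℓ2 using 1; ring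
  have hreg : ContinuousAt (fun u2 : ℂ => Gamma (u2 - μ 0) * Gamma (u2 - μ 1) *
      (Gamma (u2 - μ 0 - ℓ1))⁻¹) (μ 2 - ℓ2) :=
    (by fun_prop : ContinuousAt (fun u2 : ℂ => Gamma (u2 - μ 0) * Gamma (u2 - μ 1)) _).mul
      (differentiable_one_div_Gamma.continuous.comp (by fun_prop)).continuousAt
  have hlim := (hpole.mul (tendsto_nhdsWithin_of_tendsto_nhds hreg.tendsto)).const_mul
    ((4 / (Real.pi : ℂ) ^ 4) * cos0 μ * ((-1) ^ ℓ1 / ℓ1.factorial) *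
      Gamma (μ 1 - μ 0 - ℓ1) * Gamma (μ 2 - μ 0 - ℓ1))
  convert hlim using 1
  · funext u2
    simp only [Ftilde0ResidueFst]
    ring
  · rw [pow_add]
    ring_nf

theorem ftilde0_residue_double_general (μ : Fin 3 → ℂ)
    (hdist : ∀ i j, i ≠ j → ∀ k : ℤ, μ i - μ j ≠ (k : ℂ)) (ℓ1 ℓ2 : ℕ) :
    Filter.Tendsto
      (fun u2 : ℂ => (u2 - μ 2 + (ℓ2 : ℂ)) *
        Filter.limUnder (𝓝[≠] (-μ 0 - (ℓ1 : ℂ)))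
          (fun u1 : ℂ => (u1 + μ 0 + (ℓ1 : ℂ)) * Ftilde0 u1 u2 μ))
      (𝓝[≠] (μ 2 - (ℓ2 : ℂ)))
      (𝓝 ((4 / (Real.pi : ℂ) ^ 4) * cos0 μ *
        ((-1) ^ (ℓ1 + ℓ2) / ((Nat.factorial ℓ1 : ℂ) * (Nat.factorial ℓ2 : ℂ))) *
        (Complex.Gamma (μ 2 - μ 0 - (ℓ1 : ℂ)) * Complex.Gamma (μ 2 - μ 0 - (ℓ2 : ℂ)) /
          Complex.Gamma (μ 2 - μ 0 - (ℓ1 : ℂ) - (ℓ2 : ℂ))) *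
        Complex.Gamma (μ 1 - μ 0 - (ℓ1 : ℂ)) * Complex.Gamma (μ 2 - μ 1 - (ℓ2 : ℂ)))) := by
  have h20 := hdist 2 0 (by decide)
  have hinner (u2 : ℂ) :=
    (tendsto_residue_Ftilde0_fst μ (hdist 1 0 (by decide)) h20 ℓ1 u2).limUnder_eq
  simp_rw [hinner]
  exact tendsto_residue_Ftilde0ResidueFst μ h20 (hdist 2 1 (by decide)) ℓ1 ℓ2

/-- The iterated residue of `F̃0` at `u1 = −μ1 − ℓ1`, `u2 = μ3 − ℓ2`; the inner limit is
expressed via `limUnder`, which is the limit whenever it exists. -/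
theorem ftilde0_residue_double (μ : Fin 3 → ℂ) (hμ : μ 0 + μ 1 + μ 2 = 0)
    (hdist : ∀ i j, i ≠ j → ∀ k : ℤ, μ i - μ j ≠ (k : ℂ)) (ℓ1 ℓ2 : ℕ) :
    Filter.Tendsto
      (fun u2 : ℂ => (u2 - μ 2 + (ℓ2 : ℂ)) *
        Filter.limUnder (𝓝[≠] (-μ 0 - (ℓ1 : ℂ)))
          (fun u1 : ℂ => (u1 + μ 0 + (ℓ1 : ℂ)) * Ftilde0 u1 u2 μ))
      (𝓝[≠] (μ 2 - (ℓ2 : ℂ)))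
      (𝓝 ((4 / (Real.pi : ℂ) ^ 4) * cos0 μ *
        ((-1) ^ (ℓ1 + ℓ2) / ((Nat.factorial ℓ1 : ℂ) * (Nat.factorial ℓ2 : ℂ))) *
        (Complex.Gamma (μ 2 - μ 0 - (ℓ1 : ℂ)) * Complex.Gamma (μ 2 - μ 0 - (ℓ2 : ℂ)) /
          Complex.Gamma (μ 2 - μ 0 - (ℓ1 : ℂ) - (ℓ2 : ℂ))) *
        Complex.Gamma (μ 1 - μ 0 - (ℓ1 : ℂ)) * Complex.Gamma (μ 2 - μ 1 - (ℓ2 : ℂ)))) :=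
  ftilde0_residue_double_general μ hdist ℓ1 ℓ2
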